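/- Let X be a continuum and p ∈ X such that HS(p,X) is locally connected at the point C_p^X. Then for any two distinct points [A], [B] ∈ HS(p,X) \ {C_p^X}, the continuum HS(p,X) is aposyndetic at [A] with respect to [B]: there is a subcontinuum M of HS(p,X) with [A] ∈ int(M) and [B] ∉ M. -/

import Mathlib

/-!
Off `C(p,X)` the quotient map `C(X) → HS(p,X)` is injective and open, so it suffices that `C(X)`
is aposyndetic at `A` with respect to `B`. If some `x ∈ A` misses `B`, the continua meeting a small
ball around `x` form a continuum containing a neighbourhood of `A` but not `B`; if `A ⊊ B`, use a
sublevel set of a monotone functional that vanishes on singletons instead. Both families are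
closed and upward (resp. downward) closed, and such families are connected because they are
`ε`-chain connected for every `ε`: a continuum `K ⊆ Y` is joined to `Y` by repeatedly passing to
the component of `K` in its `ε`-neighbourhood within `Y` (boundary bumping); each step either
reaches `Y` or adds a point `ε`-far from the previous ones, which can happen only finitely often.
-/

open TopologicalSpace Set

/-- The hyperspace of subcontinua of `X`. -/
abbrev Hyp (X : Type*) [MetricSpace X] : Type _ :=
  {A : NonemptyCompacts X // IsConnected (A : Set X)}

variable {X : Type*} [MetricSpace X]

/-- `C(p,X)`, the subcontinua containing `p`, as a subset of `Hyp X`. -/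
def CpSet (p : X) : Set (Hyp X) := {A | p ∈ (A.1 : Set X)}

/-- The setoid collapsing `C(p,X)` to a point. -/
def hsSetoid (p : X) : Setoid (Hyp X) where
  r A B := A = B ∨ (A ∈ CpSet p ∧ B ∈ CpSet p)
  iseqv := by
    constructor
    · intro A; exact Or.inl rfl
    · rintro A B (rfl | h); exacts [Or.inl rfl, Or.inr ⟨h.2, h.1⟩]
    · rintro A B C (rfl | h) (rfl | h')
      exacts [Or.inl rfl, Or.inr h', Or.inr h, Or.inr ⟨h.1, h'.2⟩]

/-- The hyperspace `HS(p,X) = C(X)/C(p,X)`. -/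
abbrev HS (p : X) : Type _ := Quotient (hsSetoid p)

/-- The quotient map `π_p^X`. -/
def hsMk (p : X) : Hyp X → HS p := Quotient.mk (hsSetoid p)

/-- The singleton `{p}` as a subcontinuum. -/
def singHyp (p : X) : Hyp X :=
  ⟨⟨⟨{p}, isCompact_singleton⟩, Set.singleton_nonempty p⟩, isConnected_singleton⟩

/-- The distinguished point `C_p^X` of `HS(p,X)`. -/
def CpPoint (p : X) : HS p := hsMk p (singHyp p)

open Metric

section EpsChain

variable {α : Type*} [MetricSpace α] {S T : Set α} {ε : ℝ} {s t u : α}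

def EpsChained (S : Set α) (ε : ℝ) : α → α → Prop :=
  Relation.ReflTransGen fun a b => a ∈ S ∧ b ∈ S ∧ dist a b ≤ ε

namespace EpsChained

theorem single (hs : s ∈ S) (ht : t ∈ S) (h : dist s t ≤ ε) : EpsChained S ε s t :=
  Relation.ReflTransGen.single ⟨hs, ht, h⟩

theorem symm (h : EpsChained S ε s t) : EpsChained S ε t s :=
  Relation.ReflTransGen.mono (fun _ _ ⟨ha, hb, hab⟩ => ⟨hb, ha, dist_comm (α := α) _ _ ▸ hab⟩) _ _
    (Relation.ReflTransGen.swap _ _ h)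

theorem trans (h₁ : EpsChained S ε s t) (h₂ : EpsChained S ε t u) : EpsChained S ε s u :=
  Relation.ReflTransGen.trans h₁ h₂

theorem mono (hST : S ⊆ T) (h : EpsChained S ε s t) : EpsChained T ε s t :=
  Relation.ReflTransGen.mono (fun _ _ ⟨ha, hb, hab⟩ => ⟨hST ha, hST hb, hab⟩) _ _ h

theorem image {β : Type*} [MetricSpace β] {f : α → β} {T : Set β} (hf : MapsTo f S T)
    (hdist : ∀ a b, dist (f a) (f b) ≤ dist a b) (h : EpsChained S ε s t) :
    EpsChained T ε (f s) (f t) :=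
  Relation.ReflTransGen.lift f
    (fun _ _ ⟨ha, hb, hab⟩ => ⟨hf ha, hf hb, (hdist _ _).trans hab⟩) _ _ h

end EpsChained

theorem IsPreconnected.epsChained (hS : IsPreconnected S) (hε : 0 < ε) (hs : s ∈ S)
    (ht : t ∈ S) : EpsChained S ε s t := by
  refine hS.induction₂' _ (fun x hx => ?_) (fun _ _ _ _ _ _ => EpsChained.trans) hs ht
  filter_upwards [self_mem_nhdsWithin, nhdsWithin_le_nhds (ball_mem_nhds x hε)] with y hyS hy
  have hxy : dist x y ≤ ε := (mem_ball'.1 hy).le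
  exact ⟨.single hx hyS hxy, .single hyS hx (dist_comm x y ▸ hxy)⟩

theorem IsCompact.isPreconnected_of_epsChained (hS : IsCompact S)
    (h : ∀ s ∈ S, ∀ t ∈ S, ∀ ε > 0, EpsChained S ε s t) : IsPreconnected S := by
  rw [isPreconnected_iff_subset_of_fully_disjoint_closed hS.isClosed]
  intro U V hU hV hSUV hUV
  by_contra! hne
  obtain ⟨⟨a, haS, haU⟩, ⟨b, hbS, hbV⟩⟩ := And.imp not_subset.1 not_subset.1 hne
  obtain ⟨δ, hδ, hthick⟩ := (hS.inter_right hU).exists_cthickening_subset_open hV.isOpen_compl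
    (fun x hx => disjoint_left.1 hUV hx.2)
  have hstay : ∀ t, EpsChained S δ b t → t ∈ U := by
    intro t hbt
    induction hbt with
    | refl => exact (hSUV hbS).resolve_right hbV
    | tail _ hstep ih =>
      obtain ⟨hc, hd, hcd⟩ := hstep
      exact (hSUV hd).resolve_right
        (hthick (mem_cthickening_of_dist_le _ _ _ _ ⟨hc, ih⟩ (by rwa [dist_comm])))
  exact disjoint_left.1 hUV (hstay a (h b hbS a haS δ hδ)) ((hSUV haS).resolve_left haU)

end EpsChain

theorem exists_isClopen_of_connectedComponent_subset {β : Type*} [TopologicalSpace β]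
    [T2Space β] [CompactSpace β] {x : β} {U : Set β} (hU : IsOpen U)
    (h : connectedComponent x ⊆ U) : ∃ Z : Set β, IsClopen Z ∧ x ∈ Z ∧ Z ⊆ U := by
  have hempty : Uᶜ ∩ ⋂ Z : {Z : Set β // IsClopen Z ∧ x ∈ Z}, (Z : Set β) = ∅ := by
    rw [← connectedComponent_eq_iInter_isClopen, eq_empty_iff_forall_notMem]
    exact fun z hz => hz.1 (h hz.2)
  obtain ⟨F, hF⟩ := hU.isClosed_compl.isCompact.elim_finite_subfamily_closed
    (fun Z : {Z : Set β // IsClopen Z ∧ x ∈ Z} => (Z : Set β)) (fun Z => Z.2.1.1) hempty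
  refine ⟨⋂ Z ∈ F, (Z : Set β), isClopen_biInter_finset fun Z _ => Z.2.1,
    mem_iInter₂.2 fun Z _ => Z.2.2, fun z hz => ?_⟩
  by_contra hzU
  exact (eq_empty_iff_forall_notMem.1 hF z) ⟨hzU, by simpa using hz⟩

theorem IsCompact.isCompact_connectedComponentIn {β : Type*} [TopologicalSpace β] {N : Set β}
    (hN : IsCompact N) (x : β) : IsCompact (connectedComponentIn N x) := by
  by_cases hx : x ∈ N
  · have := isCompact_iff_compactSpace.mp hN
    rw [connectedComponentIn_eq_image hx]
    exact isClosed_connectedComponent.isCompact.image continuous_subtype_val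
  · rw [connectedComponentIn_eq_empty hx]
    exact isCompact_empty

/-- A form of the boundary bumping theorem. -/
theorem IsPreconnected.subset_of_connectedComponentIn_subset {β : Type*} [TopologicalSpace β]
    [T2Space β] {Y N O : Set β} (hY : IsPreconnected Y) (hNY : N ⊆ Y) (hN : IsCompact N)
    (hO : IsOpen O) (hYO : Y ∩ O ⊆ N) {x : β} (hx : x ∈ N)
    (hC : _root_.connectedComponentIn N x ⊆ O) : Y ⊆ N := by
  have : CompactSpace N := isCompact_iff_compactSpace.mp hN
  obtain ⟨Z, hZ, hxZ, hZO⟩ := exists_isClopen_of_connectedComponent_subset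
    (x := ⟨x, hx⟩) (hO.preimage continuous_subtype_val)
    (by rw [connectedComponentIn_eq_image hx, image_subset_iff] at hC; exact hC)
  obtain ⟨W, hW, hWZ⟩ := isOpen_induced_iff.mp hZ.isOpen
  have hZc : IsClosed ((↑) '' Z : Set β) :=
    (hZ.isClosed.isCompact.image continuous_subtype_val).isClosed
  have hcover : Y ⊆ (W ∩ O) ∪ ((↑) '' Z)ᶜ := by
    rintro y -
    by_cases hy : y ∈ ((↑) '' Z : Set β)
    · obtain ⟨z, hz, rfl⟩ := hy
      exact Or.inl ⟨(hWZ ▸ hz : z ∈ Subtype.val ⁻¹' W), hZO hz⟩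
    · exact Or.inr hy
  have hdisj : Y ∩ ((W ∩ O) ∩ ((↑) '' Z)ᶜ) = ∅ := by
    refine eq_empty_iff_forall_notMem.2 fun y ⟨hyY, ⟨hyW, hyO⟩, hyZ⟩ => hyZ ?_
    have hyN : y ∈ N := hYO ⟨hyY, hyO⟩
    exact ⟨⟨y, hyN⟩, hWZ ▸ hyW, rfl⟩
  rcases isPreconnected_iff_subset_of_disjoint.1 hY _ _ (hW.inter hO) hZc.isOpen_compl
    hcover hdisj with h | h
  · exact fun y hy => hYO ⟨hy, (h hy).2⟩
  · exact absurd ⟨_, hxZ, rfl⟩ (h (hNY hx))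

def AposyndeticAt {Y : Type*} [TopologicalSpace Y] (x y : Y) : Prop :=
  ∃ M : Set Y, IsCompact M ∧ IsConnected M ∧ x ∈ interior M ∧ y ∉ M

theorem aposyndeticAt_of_isConnected_setOf_le {Y : Type*} [TopologicalSpace Y] [CompactSpace Y]
    {f : Y → ℝ} (hf : Continuous f) {c : ℝ} {x y : Y} (hx : f x < c) (hy : c < f y)
    (hconn : IsConnected {z | f z ≤ c}) : AposyndeticAt x y :=
  ⟨_, (isClosed_le hf continuous_const).isCompact, hconn,
    interior_maximal (fun _ hz => le_of_lt hz) (isOpen_lt hf continuous_const) hx, hy.not_ge⟩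

section Metric

variable {α : Type*} [MetricSpace α]

theorem IsCompact.exists_card_le_of_pairwise_le_dist {Y : Set α} (hY : IsCompact Y) {ε : ℝ}
    (hε : 0 < ε) : ∃ n : ℕ, ∀ T : Finset α, ↑T ⊆ Y →
      (T : Set α).Pairwise (fun a b => ε ≤ dist a b) → T.card ≤ n := by
  obtain ⟨C, -, hC, hYC⟩ := finite_cover_balls_of_compact hY (half_pos hε)
  refine ⟨hC.toFinset.card, fun T hTY hT => ?_⟩
  have hcenter : ∀ a ∈ T, ∃ c ∈ C, a ∈ ball c (ε / 2) := fun a ha => by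
    simpa using hYC (hTY ha)
  choose! c hcC hac using hcenter
  refine Finset.card_le_card_of_injOn c (fun a ha => hC.mem_toFinset.2 (hcC a ha)) ?_
  intro a ha b hb hab
  by_contra hne
  refine (hT ha hb hne).not_gt ?_
  calc dist a b ≤ dist a (c a) + dist b (c b) := by rw [hab]; exact dist_triangle_right _ _ _
    _ < ε / 2 + ε / 2 := add_lt_add (mem_ball.1 (hac a ha)) (mem_ball.1 (hac b hb))
    _ = ε := add_halves ε

theorem connectedComponentIn_eq_or_exists_le_infDist {Y M : Set α} (hY : IsCompact Y)
    (hYc : IsPreconnected Y) (hMY : M ⊆ Y) {m : α} (hm : m ∈ M) {ε : ℝ} (hε : 0 < ε) :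
    connectedComponentIn (Y ∩ {y | infDist y M ≤ ε}) m = Y ∨
      ∃ y ∈ connectedComponentIn (Y ∩ {y | infDist y M ≤ ε}) m, ε ≤ infDist y M := by
  by_cases! hfar : ∃ y ∈ connectedComponentIn (Y ∩ {y | infDist y M ≤ ε}) m, ε ≤ infDist y M
  · exact Or.inr hfar
  have hmN : m ∈ Y ∩ {y | infDist y M ≤ ε} := ⟨hMY hm, by simp [infDist_zero_of_mem hm, hε.le]⟩
  have hYN : Y ⊆ Y ∩ {y | infDist y M ≤ ε} :=
    hYc.subset_of_connectedComponentIn_subset inter_subset_left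
      (hY.inter_right (isClosed_le (continuous_infDist_pt M) continuous_const))
      (isOpen_lt (continuous_infDist_pt M) continuous_const)
      (fun y hy => ⟨hy.1, (show infDist y M < ε from hy.2).le⟩) hmN hfar
  rw [subset_antisymm inter_subset_left hYN]
  exact Or.inl (hYc.connectedComponentIn (hMY hm))

end Metric

theorem TopologicalSpace.NonemptyCompacts.isClosed_setOf_isConnected :
    IsClosed {K : NonemptyCompacts X | IsConnected (K : Set X)} := by
  refine isClosed_of_closure_subset fun A hA => ⟨A.nonempty, ?_⟩
  rw [isPreconnected_iff_subset_of_fully_disjoint_closed A.isCompact.isClosed]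
  intro U V hU hV hAUV hUV
  by_contra! hne
  obtain ⟨⟨a, haA, haU⟩, ⟨b, hbA, hbV⟩⟩ := And.imp not_subset.1 not_subset.1 hne
  obtain ⟨δ, hδ, hthick⟩ := (disjoint_left.2 fun x (hx : x ∈ (A : Set X) ∩ U) hxV =>
    disjoint_left.1 hUV hx.2 hxV.2).exists_thickenings (A.isCompact.inter_right hU)
    (A.isCompact.isClosed.inter hV)
  obtain ⟨B, hB, hAB⟩ := Metric.mem_closure_iff.1 hA δ hδ
  rw [NonemptyCompacts.dist_eq] at hAB
  have hfin : hausdorffEDist (A : Set X) B ≠ ⊤ :=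
    hausdorffEDist_ne_top_of_nonempty_of_bounded A.nonempty B.nonempty A.isCompact.isBounded
      B.isCompact.isBounded
  -- `B` is close to `A = (A ∩ U) ∪ (A ∩ V)`, so it lies in, and meets both of, two disjoint
  -- open thickenings
  have hcover : (B : Set X) ⊆ thickening δ ((A : Set X) ∩ U) ∪ thickening δ ((A : Set X) ∩ V) := by
    intro y hy
    obtain ⟨x, hxA, hxy⟩ := exists_dist_lt_of_hausdorffDist_lt' hy hAB hfin
    rcases hAUV hxA with hxU | hxV
    · exact Or.inl (mem_thickening_iff.2 ⟨x, ⟨hxA, hxU⟩, dist_comm x y ▸ hxy⟩)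
    · exact Or.inr (mem_thickening_iff.2 ⟨x, ⟨hxA, hxV⟩, dist_comm x y ▸ hxy⟩)
  have hmeet : ∀ W, ∀ x ∈ (A : Set X) ∩ W,
      ((B : Set X) ∩ thickening δ ((A : Set X) ∩ W)).Nonempty := by
    intro W x hx
    obtain ⟨y, hyB, hxy⟩ := exists_dist_lt_of_hausdorffDist_lt hx.1 hAB hfin
    exact ⟨y, hyB, mem_thickening_iff.2 ⟨x, hx, dist_comm x y ▸ hxy⟩⟩
  obtain ⟨y, -, hyU, hyV⟩ := hB.2 _ _ isOpen_thickening isOpen_thickening hcover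
    (hmeet U b ⟨hbA, (hAUV hbA).resolve_right hbV⟩)
    (hmeet V a ⟨haA, (hAUV haA).resolve_left haU⟩)
  exact disjoint_left.1 hthick hyU hyV

instance [CompactSpace X] : CompactSpace (Hyp X) :=
  isCompact_iff_compactSpace.mp NonemptyCompacts.isClosed_setOf_isConnected.isCompact

def univHyp [CompactSpace X] [ConnectedSpace X] : Hyp X :=
  ⟨⟨⟨univ, isCompact_univ⟩, univ_nonempty⟩, isConnected_univ⟩

namespace Hyp

theorem hausdorffEDist_ne_top (K L : Hyp X) : hausdorffEDist (K.1 : Set X) L.1 ≠ ⊤ :=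
  hausdorffEDist_ne_top_of_nonempty_of_bounded K.1.nonempty L.1.nonempty
    K.1.isCompact.isBounded L.1.isCompact.isBounded

theorem continuous_infDist (x : X) : Continuous fun K : Hyp X => infDist x K.1 :=
  (lipschitz_infDist_set x).continuous.comp continuous_subtype_val

theorem dist_singHyp_singHyp (x y : X) : dist (singHyp x) (singHyp y) = dist x y :=
  hausdorffDist_singleton

theorem infDist_le_dist_singHyp (x : X) (K : Hyp X) : infDist x K.1 ≤ dist (singHyp x) K :=
  infDist_le_hausdorffDist_of_mem (mem_singleton x) (hausdorffEDist_ne_top (singHyp x) K)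

theorem dist_singHyp_le_dist_singHyp (x : X) {K L : Hyp X} (h : K ≤ L) :
    dist (singHyp x) K ≤ dist (singHyp x) L := by
  have hle : ∀ y ∈ (K.1 : Set X), dist y x ≤ dist (singHyp x) L := fun y hy => by
    have := infDist_le_hausdorffDist_of_mem (h hy) (hausdorffEDist_ne_top L (singHyp x))
    rwa [hausdorffDist_comm, show ((singHyp x).1 : Set X) = {x} from rfl, infDist_singleton]
      at this
  obtain ⟨k, hk⟩ := K.1.nonempty
  refine hausdorffDist_le_of_mem_dist dist_nonneg ?_ fun y hy => ⟨x, rfl, hle y hy⟩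
  intro x' hx'
  rw [mem_singleton_iff.1 hx']
  exact ⟨k, hk, dist_comm x k ▸ hle k hk⟩

theorem exists_mem_Icc_dist_le {K Y : Hyp X} (hKY : K ≤ Y) {ε : ℝ} (hε : 0 < ε) :
    ∃ L ∈ Icc K Y, dist K L ≤ ε ∧ (L = Y ∨ ∃ y ∈ (L.1 : Set X), ε ≤ infDist y K.1) := by
  obtain ⟨k, hk⟩ := K.1.nonempty
  set N := (Y.1 : Set X) ∩ {y | infDist y K.1 ≤ ε}
  have hKN : (K.1 : Set X) ⊆ N := fun y hy => ⟨hKY hy, by simp [infDist_zero_of_mem hy, hε.le]⟩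
  have hKC : (K.1 : Set X) ⊆ connectedComponentIn N k := K.2.2.subset_connectedComponentIn hk hKN
  have hCN : connectedComponentIn N k ⊆ N := connectedComponentIn_subset N k
  let L : Hyp X := ⟨⟨⟨_, (Y.1.isCompact.inter_right (isClosed_le (continuous_infDist_pt _)
    continuous_const)).isCompact_connectedComponentIn k⟩, ⟨k, hKC hk⟩⟩,
    isConnected_connectedComponentIn_iff.2 (hKN hk)⟩
  refine ⟨L, ⟨hKC, fun y hy => (hCN hy).1⟩, ?_, ?_⟩
  · exact hausdorffDist_le_of_infDist hε.le
      (fun y hy => (infDist_zero_of_mem (s := (L.1 : Set X)) (hKC hy)).trans_le hε.le)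
      (fun y hy => (hCN hy).2)
  · rcases connectedComponentIn_eq_or_exists_le_infDist Y.1.isCompact Y.2.2 hKY hk hε with h | h
    · exact Or.inl (Subtype.ext (NonemptyCompacts.ext h))
    · exact Or.inr h

theorem epsChained_Icc {K Y : Hyp X} (hKY : K ≤ Y) {ε : ℝ} (hε : 0 < ε) :
    EpsChained (Icc K Y) ε K Y := by
  classical
  obtain ⟨n, hn⟩ := Y.1.isCompact.exists_card_le_of_pairwise_le_dist hε
  -- `P m`: some continuum reachable from `K` carries `m` points pairwise `ε`-apart. Such `m` are
  -- bounded, and growing a continuum realising the largest one can only end at `Y`.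
  let P : ℕ → Prop := fun m => ∃ L ∈ Icc K Y, EpsChained (Icc K Y) ε K L ∧
    ∃ T : Finset X, ↑T ⊆ (L.1 : Set X) ∧ (T : Set X).Pairwise (fun a b => ε ≤ dist a b) ∧
      T.card = m
  obtain ⟨L, hL, hKL, T, hTL, hT, hTcard⟩ :=
    Nat.findGreatest_spec (P := P) (Nat.zero_le n) ⟨K, left_mem_Icc.2 hKY, .refl, ∅, by simp⟩
  obtain ⟨L', hL', hLL', hstop⟩ := exists_mem_Icc_dist_le hL.2 hε
  have hL'Icc : L' ∈ Icc K Y := ⟨hL.1.trans hL'.1, hL'.2⟩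
  have hKL' : EpsChained (Icc K Y) ε K L' := hKL.trans (.single hL hL'Icc hLL')
  obtain rfl | ⟨y, hyL', hy⟩ := hstop
  · exact hKL'
  have hyT : y ∉ T := fun hyT => by
    rw [infDist_zero_of_mem (hTL hyT)] at hy
    exact hy.not_gt hε
  have hsep : (↑(insert y T) : Set X).Pairwise (fun a b => ε ≤ dist a b) := by
    rw [Finset.coe_insert, pairwise_insert]
    refine ⟨hT, fun t ht _ => ?_⟩
    have hyt := hy.trans (infDist_le_dist_of_mem (hTL ht))
    exact ⟨hyt, dist_comm y t ▸ hyt⟩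
  have hsub : ↑(insert y T) ⊆ (L'.1 : Set X) := by
    rw [Finset.coe_insert]
    exact insert_subset hyL' (hTL.trans hL'.1)
  have hcard : (insert y T).card = Nat.findGreatest P n + 1 := by
    rw [Finset.card_insert_of_notMem hyT, hTcard]
  have := Nat.le_findGreatest (P := P) (hcard ▸ hn _ (hsub.trans hL'.2) hsep)
    ⟨L', hL'Icc, hKL', _, hsub, hsep, hcard⟩
  omega

section Continuum

variable [CompactSpace X] [ConnectedSpace X] {S : Set (Hyp X)}

theorem le_univHyp (K : Hyp X) : K ≤ univHyp := subset_univ _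

theorem isConnected_of_isClosed_of_isUpperSet (hS : IsClosed S) (hne : S.Nonempty)
    (hup : IsUpperSet S) : IsConnected S := by
  have chain : ∀ K ∈ S, ∀ ε > 0, EpsChained S ε K univHyp := fun K hK ε hε =>
    (epsChained_Icc (le_univHyp K) hε).mono fun L hL => hup hL.1 hK
  exact ⟨hne, hS.isCompact.isPreconnected_of_epsChained fun K hK L hL ε hε =>
    (chain K hK ε hε).trans (chain L hL ε hε).symm⟩

theorem isConnected_of_isClosed_of_isLowerSet (hS : IsClosed S) (hsing : ∀ x, singHyp x ∈ S)
    (hlow : IsLowerSet S) : IsConnected S := by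
  have chain : ∀ K ∈ S, ∀ x ∈ (K.1 : Set X), ∀ ε > 0, EpsChained S ε K (singHyp x) :=
    fun K hK x hx ε hε => (epsChained_Icc (K := singHyp x) (singleton_subset_iff.2 hx) hε).symm.mono
      fun L hL => hlow hL.2 hK
  refine ⟨⟨_, hsing (Classical.arbitrary X)⟩,
    hS.isCompact.isPreconnected_of_epsChained fun K hK L hL ε hε => ?_⟩
  obtain ⟨k, hk⟩ := K.1.nonempty
  obtain ⟨l, hl⟩ := L.1.nonempty
  have hkl : EpsChained S ε (singHyp k) (singHyp l) :=
    (isPreconnected_univ.epsChained hε (mem_univ k) (mem_univ l)).image (fun x _ => hsing x)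
      fun x y => (dist_singHyp_singHyp x y).le
  exact ((chain K hK k hk ε hε).trans hkl).trans (chain L hL l hl ε hε).symm

/-- The continua meeting a small ball around `x` separate `A` from `B`. -/
theorem aposyndeticAt_of_mem_of_notMem {A B : Hyp X} {x : X} (hxA : x ∈ (A.1 : Set X))
    (hxB : x ∉ (B.1 : Set X)) : AposyndeticAt A B := by
  have hB : 0 < infDist x B.1 :=
    (B.1.isCompact.isClosed.notMem_iff_infDist_pos B.1.nonempty).1 hxB
  have hA : infDist x A.1 = 0 := infDist_zero_of_mem hxA
  refine aposyndeticAt_of_isConnected_setOf_le (continuous_infDist x) (c := infDist x B.1 / 2)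
    (by linarith) (by linarith) (isConnected_of_isClosed_of_isUpperSet
      (isClosed_le (continuous_infDist x) continuous_const) ⟨A, show infDist x A.1 ≤ _ by linarith⟩
      fun K L hKL hK => (infDist_le_infDist_of_subset hKL K.1.nonempty).trans hK)

/-- For `x ∈ B \ A`, a sublevel set of `K ↦ sup_{y ∈ K} d(x, y) - d(x, K)` separates `A` from `B`
(the first term is `dist (singHyp x) K`); this functional is monotone and vanishes on singletons. -/
theorem aposyndeticAt_of_lt {A B : Hyp X} (hAB : A < B) : AposyndeticAt A B := by
  obtain ⟨x, hxB, hxA⟩ := SetLike.exists_of_lt (Subtype.coe_lt_coe.2 hAB)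
  have hA : 0 < infDist x A.1 :=
    (A.1.isCompact.isClosed.notMem_iff_infDist_pos A.1.nonempty).1 hxA
  have hB : infDist x B.1 = 0 := infDist_zero_of_mem hxB
  have hf : Continuous fun K : Hyp X => dist (singHyp x) K - infDist x K.1 :=
    (continuous_const.dist continuous_id).sub (continuous_infDist x)
  have hAle := infDist_le_dist_singHyp x A
  have hAB' := dist_singHyp_le_dist_singHyp x hAB.le
  refine aposyndeticAt_of_isConnected_setOf_le hf
    (c := dist (singHyp x) A - infDist x A.1 + infDist x A.1 / 2) (by linarith) (by linarith)
    (isConnected_of_isClosed_of_isLowerSet (isClosed_le hf continuous_const) (fun y => ?_)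
      fun K L hLK hK => ?_)
  · change dist (singHyp x) (singHyp y) - infDist x {y} ≤ _
    rw [dist_singHyp_singHyp, infDist_singleton]
    linarith
  · have := dist_singHyp_le_dist_singHyp x hLK
    have := infDist_le_infDist_of_subset (x := x) hLK L.1.nonempty
    change _ ≤ (_ : ℝ) at hK ⊢
    linarith

theorem aposyndeticAt {A B : Hyp X} (hAB : A ≠ B) : AposyndeticAt A B := by
  by_cases h : A ≤ B
  · exact aposyndeticAt_of_lt (lt_of_le_of_ne h hAB)
  · obtain ⟨x, hxA, hxB⟩ := SetLike.not_le_iff_exists.1 (Subtype.coe_le_coe.not.2 h)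
    exact aposyndeticAt_of_mem_of_notMem hxA hxB

end Continuum

end Hyp

section Quotient

variable {p : X}

theorem hsMk_surjective : Function.Surjective (hsMk p) := Quotient.mk_surjective

theorem continuous_hsMk : Continuous (hsMk p) := continuous_quotient_mk'

theorem hsMk_eq_hsMk_iff {A B : Hyp X} :
    hsMk p A = hsMk p B ↔ A = B ∨ (A ∈ CpSet p ∧ B ∈ CpSet p) :=
  Quotient.eq

theorem hsMk_eq_hsMk_iff_of_notMem {A B : Hyp X} (hB : B ∉ CpSet p) :
    hsMk p A = hsMk p B ↔ A = B := by
  rw [hsMk_eq_hsMk_iff]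
  exact or_iff_left fun h => hB h.2

theorem hsMk_eq_CpPoint_iff {A : Hyp X} : hsMk p A = CpPoint p ↔ A ∈ CpSet p := by
  rw [CpPoint, hsMk_eq_hsMk_iff]
  exact ⟨by rintro (rfl | ⟨hA, -⟩); exacts [rfl, hA], fun hA => Or.inr ⟨hA, rfl⟩⟩

theorem isClosed_CpSet : IsClosed (CpSet p) := by
  have : CpSet p = {K : Hyp X | infDist p K.1 = 0} := by
    ext K
    exact K.1.isCompact.isClosed.mem_iff_infDist_zero K.1.nonempty
  rw [this]
  exact isClosed_eq (Hyp.continuous_infDist p) continuous_const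

theorem isOpen_image_hsMk {U : Set (Hyp X)} (hU : IsOpen U) (hUp : Disjoint U (CpSet p)) :
    IsOpen (hsMk p '' U) := by
  rw [← isQuotientMap_quotient_mk'.isOpen_preimage]
  convert hU using 1
  ext B
  refine ⟨fun ⟨A, hA, hAB⟩ => ?_, fun hB => ⟨B, hB, rfl⟩⟩
  have hBA : B = A := (hsMk_eq_hsMk_iff_of_notMem (disjoint_left.1 hUp hA)).1 hAB.symm
  exact hBA ▸ hA

theorem AposyndeticAt.image_hsMk {A B : Hyp X} (h : AposyndeticAt A B) (hA : A ∉ CpSet p)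
    (hB : B ∉ CpSet p) : AposyndeticAt (hsMk p A) (hsMk p B) := by
  obtain ⟨M, hMc, hMconn, hAM, hBM⟩ := h
  refine ⟨hsMk p '' M, hMc.image continuous_hsMk, hMconn.image _ continuous_hsMk.continuousOn,
    interior_maximal (image_mono (sdiff_subset.trans interior_subset))
      (isOpen_image_hsMk (isOpen_interior.sdiff isClosed_CpSet) disjoint_sdiff_left)
      ⟨A, ⟨hAM, hA⟩, rfl⟩, ?_⟩
  rintro ⟨K, hK, hKB⟩
  exact hBM ((hsMk_eq_hsMk_iff_of_notMem hB).1 hKB ▸ hK)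

end Quotient

theorem stmt17_general [CompactSpace X] [ConnectedSpace X] (p : X) :
    ∀ a b : HS p, a ≠ CpPoint p → b ≠ CpPoint p → a ≠ b →
      ∃ M : Set (HS p), IsCompact M ∧ IsConnected M ∧ a ∈ interior M ∧ b ∉ M := by
  intro a b ha hb hab
  obtain ⟨A, rfl⟩ := hsMk_surjective a
  obtain ⟨B, rfl⟩ := hsMk_surjective b
  rw [Ne, hsMk_eq_CpPoint_iff] at ha hb
  exact (Hyp.aposyndeticAt (ne_of_apply_ne _ hab)).image_hsMk ha hb

theorem stmt17 [CompactSpace X] [ConnectedSpace X] [Nontrivial X] (p : X)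
    (hloc : ∀ U ∈ nhds (CpPoint p), ∃ V ∈ nhds (CpPoint p), IsConnected V ∧ V ⊆ U) :
    ∀ a b : HS p, a ≠ CpPoint p → b ≠ CpPoint p → a ≠ b →
      ∃ M : Set (HS p), IsCompact M ∧ IsConnected M ∧ a ∈ interior M ∧ b ∉ M :=
  stmt17_general p
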